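/- Assume the Hardy–Littlewood lower bound: there exists N₀ such that for every even integer N ≥ N₀, the number of ordered pairs (p₁,p₂) of primes with 3 ≤ p₁,p₂ ≤ N and p₁+p₂ = N is at least (1/2)·(N/φ(N))·∏_{p prime, p∤N}(1 - 1/(p-1)²)·N/(log N)². Let d = ∏_{p odd prime}(1 - 1/(p-1)²). Then there exists a constant C > 0 such that for every sufficiently large odd integer q and every real x ≥ q⁴, ∑_{k=1}^{q} ( ∑_{p prime, 3 ≤ p ≤ x} e(kp/q) )² ≥ (q·d·x²)/(4·φ(q)·(log x)²) - C·(x·q²)/(φ(q)·(log x)²). -/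

import Mathlib

/-- `e(x) = exp(2πix)`. -/
noncomputable def e (x : ℝ) : ℂ := Complex.exp (2 * (Real.pi : ℂ) * Complex.I * (x : ℂ))
/-- The number of ordered pairs `(p₁, p₂)` of primes with `3 ≤ p₁, p₂ ≤ N` and `p₁ + p₂ = N`. -/
def goldbachCount (N : ℕ) : ℕ :=
  ((Finset.Icc 3 N ×ˢ Finset.Icc 3 N).filter
    fun p => p.1.Prime ∧ p.2.Prime ∧ p.1 + p.2 = N).card
/-- The singular product `∏_{p prime, p ∤ N} (1 - 1/(p-1)²)`. -/
noncomputable def singularProd (N : ℕ) : ℝ :=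
  ∏' p : Nat.Primes, if (p : ℕ) ∣ N then 1 else 1 - 1 / ((p : ℝ) - 1) ^ 2
/-- The constant `d = ∏_{p odd prime} (1 - 1/(p-1)²)`. -/
noncomputable def dConst : ℝ :=
  ∏' p : Nat.Primes, if (p : ℕ) = 2 then 1 else 1 - 1 / ((p : ℝ) - 1) ^ 2

/-!
By orthogonality of `k ↦ e(km/q)`, the left-hand side is `q` times the number of pairs of primes
`3 ≤ p₁, p₂ ≤ x` with `q ∣ p₁ + p₂`. Among them are the Goldbach representations of every
`N = 2qj ≤ x`. For such `N` the Hardy–Littlewood bound applies, and it only gets weaker after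
replacing `N/φ(N)` by `2q/φ(q)` (as `φ(ab) ≤ φ(a) b`), the singular product of the even number `N`
by `d` (it has fewer factors, all below `1`), and `log N` by `log x`; so `N` contributes at least
`d q N/(φ(q) log² x)` pairs. Summing over `j ≤ J = ⌊x⌋/(2q)` gives `d q² J (J + 1)/(φ(q) log² x)`,
and `2qJ > x - 1 - 2q` turns this into the main term with an error `O(d x q²/(φ(q) log² x))`.
-/

open Finset Real
open scoped Nat

namespace Real

variable {ι : Type*} {f g : ι → ℝ}

theorem tprod_pos_of_summable_log (hf : ∀ i, 0 < f i) (hfs : Summable fun i ↦ log (f i)) :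
    0 < ∏' i, f i :=
  rexp_tsum_eq_tprod hf hfs ▸ exp_pos _

theorem tprod_le_tprod_of_summable_log (hf : ∀ i, 0 < f i) (hfg : ∀ i, f i ≤ g i)
    (hfs : Summable fun i ↦ log (f i)) (hgs : Summable fun i ↦ log (g i)) :
    ∏' i, f i ≤ ∏' i, g i := by
  rw [← rexp_tsum_eq_tprod hf hfs, ← rexp_tsum_eq_tprod (fun i ↦ (hf i).trans_le (hfg i)) hgs]
  exact exp_le_exp.2 (hfs.tsum_le_tsum (fun i ↦ log_le_log (hf i) (hfg i)) hgs)

end Real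

/-- `dConst` and `singularProd N` are the products of these factors for `P = (· = 2)` and
`P = (· ∣ N)`. -/
noncomputable def singularFactor (P : Nat.Primes → Prop) [DecidablePred P] (p : Nat.Primes) : ℝ :=
  if P p then 1 else 1 - 1 / ((p : ℝ) - 1) ^ 2

theorem summable_one_div_prime_sub_one_sq :
    Summable fun p : Nat.Primes ↦ 1 / ((p : ℝ) - 1) ^ 2 := by
  have : Summable fun n : ℕ ↦ 1 / ((n : ℝ) - 1) ^ 2 := by
    rw [← summable_nat_add_iff 1]
    simp
  exact this.subtype _

namespace singularFactor

variable {P Q : Nat.Primes → Prop} [DecidablePred P] [DecidablePred Q]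

theorem pos (hP : ∀ p : Nat.Primes, (p : ℕ) = 2 → P p) (p : Nat.Primes) :
    0 < singularFactor P p := by
  unfold singularFactor
  split_ifs with hp
  · exact one_pos
  · have h3 : (3 : ℝ) ≤ p := by
      have := p.2.two_le
      exact_mod_cast (show 3 ≤ (p : ℕ) by grind)
    have : 1 / ((p : ℝ) - 1) ^ 2 < 1 := by
      rw [div_lt_one (by nlinarith)]
      nlinarith
    linarith

theorem summable_log (P : Nat.Primes → Prop) [DecidablePred P] :
    Summable fun p ↦ log (singularFactor P p) := by
  have hs : Summable fun p : Nat.Primes ↦ -if P p then (0 : ℝ) else 1 / ((p : ℝ) - 1) ^ 2 :=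
    (summable_one_div_prime_sub_one_sq.of_nonneg_of_le (fun p ↦ by split_ifs <;> positivity)
      fun p ↦ by split_ifs <;> simp [sq_nonneg]).neg
  refine (Real.summable_log_one_add_of_summable hs).congr fun p ↦ ?_
  unfold singularFactor
  split_ifs <;> ring_nf

theorem mono (hPQ : ∀ p, P p → Q p) (p : Nat.Primes) :
    singularFactor P p ≤ singularFactor Q p := by
  unfold singularFactor
  split_ifs with hp hq hq
  · rfl
  · exact absurd (hPQ p hp) hq
  · linarith [show 0 ≤ 1 / ((p : ℝ) - 1) ^ 2 by positivity]
  · rfl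

end singularFactor

theorem dConst_pos : 0 < dConst :=
  Real.tprod_pos_of_summable_log (singularFactor.pos fun _ ↦ id) (singularFactor.summable_log _)

theorem dConst_le_singularProd {N : ℕ} (hN : Even N) : dConst ≤ singularProd N :=
  Real.tprod_le_tprod_of_summable_log (singularFactor.pos fun _ ↦ id)
    (singularFactor.mono fun _ hp ↦ hp ▸ hN.two_dvd) (singularFactor.summable_log _)
    (singularFactor.summable_log _)

theorem Nat.totient_mul_le (a m : ℕ) : φ (a * m) ≤ φ a * m := by
  induction m using Nat.recOnMul generalizing a with
  | zero => simp
  | one => simp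
  | prime p hp =>
    by_cases hpa : p ∣ a
    · rw [mul_comm, Nat.totient_mul_of_prime_of_dvd hp hpa, mul_comm]
    · rw [mul_comm, Nat.totient_mul_of_prime_of_not_dvd hp hpa, mul_comm]
      exact Nat.mul_le_mul_left _ (Nat.sub_le p 1)
  | mul b c hb hc =>
    calc φ (a * (b * c)) = φ (a * b * c) := by rw [mul_assoc]
      _ ≤ φ (a * b) * c := hc _
      _ ≤ φ a * b * c := Nat.mul_le_mul_right c (hb a)
      _ = φ a * (b * c) := mul_assoc ..

theorem div_totient_le_div_totient_mul {a : ℕ} (ha : 0 < a) {m : ℕ} (hm : 0 < m) :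
    (a : ℝ) / φ a ≤ ((a * m : ℕ) : ℝ) / φ (a * m) := by
  have hφ : (0 : ℝ) < φ (a * m) := by exact_mod_cast Nat.totient_pos.2 (by positivity)
  rw [div_le_div_iff₀ (by exact_mod_cast Nat.totient_pos.2 ha) hφ]
  have := Nat.totient_mul_le a m
  push_cast
  nlinarith [show ((φ (a * m) : ℕ) : ℝ) ≤ φ a * m by exact_mod_cast this]

theorem IsPrimitiveRoot.sum_Icc_pow_mul {R : Type*} [CommRing R] [IsDomain R] {ζ : R} {q : ℕ}
    (hζ : IsPrimitiveRoot ζ q) (m : ℕ) :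
    ∑ k ∈ Icc 1 q, ζ ^ (k * m) = if q ∣ m then (q : R) else 0 := by
  have hshift : ∑ k ∈ Icc 1 q, ζ ^ (k * m) = ζ ^ m * ∑ k ∈ range q, (ζ ^ m) ^ k := by
    rw [← Ico_add_one_right_eq_Icc, sum_Ico_eq_sum_range, add_tsub_cancel_right, mul_sum]
    simp_rw [← pow_mul, ← pow_add, add_mul, one_mul, mul_comm m]
  rw [hshift]
  split_ifs with hdvd
  · simp [(hζ.pow_eq_one_iff_dvd m).2 hdvd]
  · have hm : ζ ^ m ≠ 1 := mt (hζ.pow_eq_one_iff_dvd m).1 hdvd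
    have hgeom : (∑ k ∈ range q, (ζ ^ m) ^ k) * (ζ ^ m - 1) = 0 := by
      rw [geom_sum_mul, ← pow_mul, mul_comm, pow_mul, hζ.pow_eq_one, one_pow, sub_self]
    rw [(mul_eq_zero.1 hgeom).resolve_right (sub_ne_zero.2 hm), mul_zero]

theorem e_natCast_mul_div_eq_pow (k m q : ℕ) :
    e (k * m / q) = Complex.exp (2 * Real.pi * Complex.I / q) ^ (k * m) := by
  rw [e, ← Complex.exp_nat_mul]
  congr 1
  push_cast
  ring

theorem sum_Icc_e_mul_div {q : ℕ} (hq : q ≠ 0) (m : ℕ) :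
    ∑ k ∈ Icc 1 q, e (k * m / q) = if q ∣ m then (q : ℂ) else 0 := by
  simp_rw [e_natCast_mul_div_eq_pow]
  exact (Complex.isPrimitiveRoot_exp q hq).sum_Icc_pow_mul m

theorem sum_Icc_sq_sum_e_eq_card (S : Finset ℕ) {q : ℕ} (hq : q ≠ 0) :
    ∑ k ∈ Icc 1 q, (∑ n ∈ S, e (k * n / q)) ^ 2 =
      q * (#{nn ∈ S ×ˢ S | q ∣ nn.1 + nn.2} : ℂ) := by
  have hmul (k a b : ℕ) : e (k * a / q) * e (k * b / q) = e (k * (a + b : ℕ) / q) := by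
    simp only [e_natCast_mul_div_eq_pow, ← pow_add, ← mul_add]
  calc _ = ∑ k ∈ Icc 1 q, ∑ nn ∈ S ×ˢ S, e (k * (nn.1 + nn.2 : ℕ) / q) :=
        sum_congr rfl fun k _ ↦ by rw [sq, sum_mul_sum, ← sum_product']; simp only [hmul]
    _ = ∑ nn ∈ S ×ˢ S, ∑ k ∈ Icc 1 q, e (k * (nn.1 + nn.2 : ℕ) / q) := sum_comm
    _ = _ := by
        rw [sum_congr rfl fun nn _ ↦ sum_Icc_e_mul_div hq _, sum_ite, sum_const, sum_const_zero,
          add_zero, nsmul_eq_mul, mul_comm]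

theorem goldbachCount_eq_card_filter {N M : ℕ} (hNM : N ≤ M) :
    goldbachCount N =
      #{pp ∈ (Icc 3 M).filter Nat.Prime ×ˢ (Icc 3 M).filter Nat.Prime | pp.1 + pp.2 = N} := by
  unfold goldbachCount
  congr 1
  ext ⟨a, b⟩
  simp only [mem_filter, mem_product, mem_Icc]
  grind

theorem sum_goldbachCount_le_card_filter_dvd_add {q : ℕ} (hq : 0 < q) (M : ℕ) :
    ∑ j ∈ Icc 1 (M / (2 * q)), goldbachCount (2 * q * j) ≤
      #{pp ∈ (Icc 3 M).filter Nat.Prime ×ˢ (Icc 3 M).filter Nat.Prime | q ∣ pp.1 + pp.2} := by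
  set P := (Icc 3 M).filter Nat.Prime
  set S := (Icc 1 (M / (2 * q))).image (2 * q * ·)
  have hSM : ∀ N ∈ S, N ≤ M := by
    simp only [S, mem_image, mem_Icc]
    rintro _ ⟨j, ⟨-, hj⟩, rfl⟩
    exact mul_comm (2 * q) j ▸ (Nat.le_div_iff_mul_le (by positivity)).1 hj
  calc ∑ j ∈ Icc 1 (M / (2 * q)), goldbachCount (2 * q * j)
      = ∑ N ∈ S, goldbachCount N :=
        (sum_image fun _ _ _ _ h ↦ Nat.eq_of_mul_eq_mul_left (by positivity) h).symm
    _ = ∑ N ∈ S, #{pp ∈ P ×ˢ P | pp.1 + pp.2 = N} :=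
        sum_congr rfl fun N hN ↦ goldbachCount_eq_card_filter (hSM N hN)
    _ = #{pp ∈ P ×ˢ P | pp.1 + pp.2 ∈ S} := sum_card_fiberwise_eq_card_filter _ _ _
    _ ≤ #{pp ∈ P ×ˢ P | q ∣ pp.1 + pp.2} := by
        refine card_le_card (monotone_filter_right _ fun pp _ hpp ↦ ?_)
        obtain ⟨j, -, hj⟩ := mem_image.1 hpp
        exact ⟨2 * j, by rw [← hj]; ring⟩

def HardyLittlewoodLowerBound (N₀ : ℕ) : Prop :=
  ∀ N : ℕ, N₀ ≤ N → Even N →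
    (goldbachCount N : ℝ) ≥
      1 / 2 * ((N : ℝ) / (Nat.totient N : ℝ)) * singularProd N * ((N : ℝ) / (Real.log N) ^ 2)

theorem HardyLittlewoodLowerBound.le_goldbachCount {N₀ : ℕ} (hHL : HardyLittlewoodLowerBound N₀)
    {q : ℕ} (hq : Odd q) {N : ℕ} (hN₀ : N₀ ≤ N) (hN : 0 < N) (hqN : 2 * q ∣ N) {x : ℝ}
    (hNx : N ≤ x) :
    dConst * q * N / (φ q * log x ^ 2) ≤ goldbachCount N := by
  obtain ⟨j, rfl⟩ := hqN
  have hq0 : 0 < q := hq.pos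
  have hj : 0 < j := Nat.pos_of_mul_pos_left hN
  have hφ : (2 * q : ℝ) / φ q ≤ ((2 * q * j : ℕ) : ℝ) / φ (2 * q * j) := by
    rw [← Nat.totient_two_mul_of_odd hq]
    exact_mod_cast div_totient_le_div_totient_mul (by positivity) hj
  have hlogN : 0 < log (2 * q * j : ℕ) := log_pos (by norm_cast; nlinarith)
  have hlog : log (2 * q * j : ℕ) ^ 2 ≤ log x ^ 2 := by gcongr
  have hE : Even (2 * q * j) := (even_two.mul_right q).mul_right j
  calc dConst * q * (2 * q * j : ℕ) / (φ q * log x ^ 2)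
      = 1 / 2 * ((2 * q : ℝ) / φ q) * dConst * ((2 * q * j : ℕ) / log x ^ 2) := by
        field_simp
    _ ≤ 1 / 2 * (((2 * q * j : ℕ) : ℝ) / φ (2 * q * j)) * singularProd (2 * q * j) *
          ((2 * q * j : ℕ) / log (2 * q * j : ℕ) ^ 2) := by
        have hdS := dConst_le_singularProd hE
        have hS : 0 ≤ singularProd (2 * q * j) := dConst_pos.le.trans hdS
        gcongr
        exact dConst_pos.le
    _ ≤ goldbachCount (2 * q * j) := hHL _ hN₀ hE

theorem sum_Icc_natCast_mul_two (J : ℕ) : (∑ j ∈ Icc 1 J, (j : ℝ)) * 2 = J * (J + 1) := by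
  induction J with
  | zero => simp
  | succ J ih =>
    rw [sum_Icc_succ_top (by omega), add_mul, ih]
    push_cast
    ring

theorem HardyLittlewoodLowerBound.le_card_filter_dvd_add {N₀ : ℕ}
    (hHL : HardyLittlewoodLowerBound N₀) {q : ℕ} (hq : Odd q) (hN₀ : N₀ ≤ 2 * q) {M : ℕ} {x : ℝ}
    (hMx : M ≤ x) :
    dConst * q ^ 2 * (M / (2 * q) : ℕ) * ((M / (2 * q) : ℕ) + 1) / (φ q * log x ^ 2) ≤
      #{pp ∈ (Icc 3 M).filter Nat.Prime ×ˢ (Icc 3 M).filter Nat.Prime | q ∣ pp.1 + pp.2} := by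
  set J := M / (2 * q)
  have h2q : 0 < 2 * q := Nat.mul_pos two_pos hq.pos
  have hJ : ∀ j ∈ Icc 1 J, 2 * q * j ≤ M := fun j hj ↦
    mul_comm (2 * q) j ▸ (Nat.le_div_iff_mul_le h2q).1 (mem_Icc.1 hj).2
  calc _ = ∑ j ∈ Icc 1 J, dConst * q * (2 * q * j : ℕ) / (φ q * log x ^ 2) := by
        push_cast
        rw [← sum_div, ← mul_sum, ← mul_sum]
        congr 1
        linear_combination (-(dConst * (q : ℝ) ^ 2)) * sum_Icc_natCast_mul_two J
    _ ≤ ∑ j ∈ Icc 1 J, (goldbachCount (2 * q * j) : ℝ) := sum_le_sum fun j hj ↦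
        hHL.le_goldbachCount hq (hN₀.trans (Nat.le_mul_of_pos_right _ (mem_Icc.1 hj).1))
          (Nat.mul_pos h2q (mem_Icc.1 hj).1) (dvd_mul_right _ _)
          ((Nat.cast_le.2 (hJ j hj)).trans hMx)
    _ ≤ _ := by exact_mod_cast sum_goldbachCount_le_card_filter_dvd_add hq.pos M

theorem mul_sq_div_four_sub_le {q x J : ℝ} (hq : 1 ≤ q) (hJ : 0 ≤ J) (hx : 2 * q + 1 ≤ x)
    (hxJ : x - 1 < 2 * q * (J + 1)) :
    q * x ^ 2 / 4 - 3 / 2 * x * q ^ 2 ≤ q ^ 3 * J * (J + 1) := by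
  have hs : (x - 1 - 2 * q) ^ 2 ≤ 4 * q ^ 2 * J * (J + 1) := by
    nlinarith [mul_le_mul hxJ.le hxJ.le (by linarith) (by positivity)]
  nlinarith [mul_le_mul_of_nonneg_left hs (by linarith : 0 ≤ q)]

/-- Assuming the Hardy–Littlewood lower bound, there is a constant `C > 0` such that for every
sufficiently large odd `q` and every real `x ≥ q⁴`,
`∑_{k=1}^{q} ( ∑_{p prime, 3 ≤ p ≤ x} e(kp/q) )² ≥ q·d·x²/(4·φ(q)·(log x)²) - C·x·q²/(φ(q)·(log x)²)`. -/
theorem sum_sq_prime_exponential_lower_bound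
    (N₀ : ℕ)
    (hHL : ∀ N : ℕ, N₀ ≤ N → Even N →
      (goldbachCount N : ℝ) ≥
        1 / 2 * ((N : ℝ) / (Nat.totient N : ℝ)) * singularProd N *
          ((N : ℝ) / (Real.log N) ^ 2)) :
    ∃ C : ℝ, 0 < C ∧ ∃ Q : ℕ, ∀ q : ℕ, Odd q → Q ≤ q → ∀ x : ℝ, (q : ℝ) ^ 4 ≤ x →
      (∑ k ∈ Finset.Icc 1 q,
          (∑ p ∈ (Finset.Icc 3 ⌊x⌋₊).filter Nat.Prime,
            e ((k : ℝ) * (p : ℝ) / (q : ℝ))) ^ 2).re ≥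
        (q : ℝ) * dConst * x ^ 2 / (4 * (Nat.totient q : ℝ) * (Real.log x) ^ 2) -
          C * (x * (q : ℝ) ^ 2) / ((Nat.totient q : ℝ) * (Real.log x) ^ 2) := by
  refine ⟨3 / 2 * dConst, by linarith [dConst_pos], N₀ + 3, fun q hq hQ x hqx ↦ ?_⟩
  set J := ⌊x⌋₊ / (2 * q)
  have hq3 : (3 : ℝ) ≤ q := by exact_mod_cast (by omega : 3 ≤ q)
  have hx : 2 * q + 1 ≤ x := by nlinarith [show (9 : ℝ) ≤ q ^ 2 by nlinarith]
  have hxJ : x - 1 < 2 * q * (J + 1) := by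
    have : (⌊x⌋₊ : ℝ) < 2 * q * (J + 1) := by
      exact_mod_cast Nat.lt_mul_div_succ ⌊x⌋₊ (by omega : 0 < 2 * q)
    linarith [Nat.lt_floor_add_one x]
  have hcount := HardyLittlewoodLowerBound.le_card_filter_dvd_add hHL hq (by omega)
    (Nat.floor_le (by linarith : 0 ≤ x))
  rw [sum_Icc_sq_sum_e_eq_card _ hq.pos.ne', ← Nat.cast_mul, Complex.natCast_re, Nat.cast_mul]
  calc _ = dConst * (q * x ^ 2 / 4 - 3 / 2 * x * q ^ 2) / (φ q * log x ^ 2) := by ring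
    _ ≤ dConst * (q ^ 3 * J * (J + 1)) / (φ q * log x ^ 2) := by
        gcongr
        · exact dConst_pos.le
        · exact mul_sq_div_four_sub_le (by linarith) J.cast_nonneg hx hxJ
    _ = q * (dConst * q ^ 2 * J * (J + 1) / (φ q * log x ^ 2)) := by ring
    _ ≤ _ := by gcongr
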